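/- For all ν > -1 and x > 0, the inequality I_ν(x)·I_{ν+1}(x) - I_{ν-1}(x)·I_{ν+2}(x) ≥ 0 holds, where I_ν is the modified Bessel function of the first kind. -/

import Mathlib

/-! Both products are `(x/2)^(2ν+1)` times a power series in `(x/2)^2`. By Chu–Vandermonde the
`k`-th coefficient of `I_a I_b` is `(a+b+2k)(a+b+2k-1)⋯(a+b+k+1) / (k! Γ(a+k+1) Γ(b+k+1))`.
For `(a, b) = (ν, ν+1)` and `(ν-1, ν+2)` the numerators agree, and with `z = ν + k` the Gamma
factors compare through `1 / (Γ(z) Γ(z+3)) = z / (z+2) · 1 / (Γ(z+1) Γ(z+2))`, so every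
coefficient of the difference is nonnegative. -/

/-- Modified Bessel function of the first kind, via its power series (for `x > 0`). -/
noncomputable def besselI (ν x : ℝ) : ℝ :=
  ∑' n : ℕ, (x / 2) ^ (2 * (n : ℝ) + ν) / ((n.factorial : ℝ) * Real.Gamma (ν + n + 1))

open Finset Real Polynomial
open scoped Nat

theorem descPochhammer_smeval_eq_eval {R : Type*} [CommRing R] (r : R) (n : ℕ) :
    (descPochhammer ℤ n).smeval r = (descPochhammer R n).eval r := by
  rw [descPochhammer_smeval_eq_ascPochhammer, ascPochhammer_smeval_eq_eval,
    descPochhammer_eval_eq_ascPochhammer]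

theorem descPochhammer_eval_add {R : Type*} [CommRing R] (r s : R) (k : ℕ) :
    (descPochhammer R k).eval (r + s) = ∑ ij ∈ antidiagonal k,
      (k.choose ij.1 : R) * ((descPochhammer R ij.1).eval r * (descPochhammer R ij.2).eval s) := by
  simpa only [descPochhammer_smeval_eq_eval] using
    Ring.descPochhammer_smeval_add k (Commute.all r s)

namespace Real

-- No hypothesis on `s`: at the poles both sides vanish, since Mathlib sets `Gamma (-n) = 0`.
theorem inv_Gamma_eq_mul_inv_Gamma_add_one (s : ℝ) : (Gamma s)⁻¹ = s * (Gamma (s + 1))⁻¹ := by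
  rcases eq_or_ne s 0 with rfl | hs
  · simp [Gamma_zero]
  · rw [Gamma_add_one hs, mul_inv, ← mul_assoc, mul_inv_cancel₀ hs, one_mul]

theorem inv_Gamma_sub_nat_add_one (s : ℝ) (n : ℕ) :
    (Gamma (s - n + 1))⁻¹ = (descPochhammer ℝ n).eval s * (Gamma (s + 1))⁻¹ := by
  induction n with
  | zero => simp
  | succ n ih =>
    rw [descPochhammer_succ_eval, mul_right_comm, ← ih, inv_Gamma_eq_mul_inv_Gamma_add_one]
    push_cast
    ring_nf

theorem inv_Gamma_mul_inv_Gamma_add_three_le {s : ℝ} (hs : -1 < s) :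
    (Gamma s)⁻¹ * (Gamma (s + 3))⁻¹ ≤ (Gamma (s + 1))⁻¹ * (Gamma (s + 2))⁻¹ := by
  have hpos : 0 < (Gamma (s + 1))⁻¹ * (Gamma (s + 3))⁻¹ := by
    have := Gamma_pos_of_pos (show 0 < s + 1 by linarith)
    have := Gamma_pos_of_pos (show 0 < s + 3 by linarith)
    positivity
  rw [inv_Gamma_eq_mul_inv_Gamma_add_one s, inv_Gamma_eq_mul_inv_Gamma_add_one (s + 2),
    show s + 2 + 1 = s + 3 by ring]
  nlinarith

end Real

noncomputable def besselCoeff (μ : ℝ) (n : ℕ) : ℝ := ((n ! : ℝ) * Gamma (μ + n + 1))⁻¹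

noncomputable def besselProdCoeff (a b : ℝ) (k : ℕ) : ℝ :=
  ∑ ij ∈ antidiagonal k, besselCoeff a ij.1 * besselCoeff b ij.2

theorem besselI_eq_rpow_mul_tsum (μ : ℝ) {x : ℝ} (hx : 0 < x) :
    besselI μ x = (x / 2) ^ μ * ∑' n : ℕ, besselCoeff μ n * ((x / 2) ^ 2) ^ n := by
  rw [besselI, ← tsum_mul_left]
  congr 1 with n
  rw [show 2 * (n : ℝ) + μ = μ + (2 * n : ℕ) by push_cast; ring,
    rpow_add (by positivity), rpow_natCast, pow_mul, besselCoeff, div_eq_mul_inv]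
  ring

theorem summable_norm_besselCoeff_mul_pow (μ t : ℝ) :
    Summable fun n ↦ ‖besselCoeff μ n * t ^ n‖ := by
  refine .of_norm_bounded_eventually_nat (summable_pow_div_factorial |t|) ?_
  filter_upwards [Filter.eventually_ge_atTop ⌈1 - μ⌉₊] with n hn
  have hΓ : 1 ≤ Gamma (μ + n + 1) := by
    have h2 : (2 : ℝ) ≤ μ + n + 1 := by linarith [(Nat.ceil_le.mp hn : 1 - μ ≤ n)]
    simpa [Gamma_two] using Gamma_strictMonoOn_Ici.monotoneOn (by simp) h2 h2
  rw [norm_norm, norm_mul, norm_pow, norm_eq_abs, norm_eq_abs, besselCoeff, mul_inv,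
    abs_mul, abs_inv, abs_inv, Nat.abs_cast, abs_of_pos (by linarith), div_eq_inv_mul]
  gcongr
  exact mul_le_of_le_one_right (by positivity) (inv_le_one_of_one_le₀ hΓ)

theorem sum_antidiagonal_besselCoeff_mul_pow (a b t : ℝ) (k : ℕ) :
    ∑ ij ∈ antidiagonal k, besselCoeff a ij.1 * t ^ ij.1 * (besselCoeff b ij.2 * t ^ ij.2) =
      besselProdCoeff a b k * t ^ k := by
  rw [besselProdCoeff, sum_mul]
  refine sum_congr rfl fun ij hij ↦ ?_
  rw [← mem_antidiagonal.mp hij, pow_add]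
  ring

theorem summable_besselProdCoeff_mul_pow (a b t : ℝ) :
    Summable fun k ↦ besselProdCoeff a b k * t ^ k := by
  simpa only [sum_antidiagonal_besselCoeff_mul_pow] using
    (summable_norm_sum_mul_antidiagonal_of_summable_norm
      (summable_norm_besselCoeff_mul_pow a t) (summable_norm_besselCoeff_mul_pow b t)).of_norm

theorem besselI_mul_besselI (a b : ℝ) {x : ℝ} (hx : 0 < x) :
    besselI a x * besselI b x =
      (x / 2) ^ (a + b) * ∑' k : ℕ, besselProdCoeff a b k * ((x / 2) ^ 2) ^ k := by
  rw [besselI_eq_rpow_mul_tsum a hx, besselI_eq_rpow_mul_tsum b hx, mul_mul_mul_comm,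
    ← rpow_add (by positivity), tsum_mul_tsum_eq_tsum_sum_antidiagonal_of_summable_norm
      (summable_norm_besselCoeff_mul_pow a _) (summable_norm_besselCoeff_mul_pow b _)]
  simp only [sum_antidiagonal_besselCoeff_mul_pow]

theorem besselProdCoeff_eq (a b : ℝ) (k : ℕ) :
    besselProdCoeff a b k = (descPochhammer ℝ k).eval (a + b + 2 * k) /
      (k ! * Gamma (a + k + 1) * Gamma (b + k + 1)) := by
  rw [show a + b + 2 * k = (b + k) + (a + k) by ring, descPochhammer_eval_add, sum_div]
  refine sum_congr rfl fun ij hij ↦ ?_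
  obtain ⟨i, j⟩ := ij
  obtain rfl : i + j = k := mem_antidiagonal.mp hij
  have hi : a + i + 1 = a + (i + j : ℕ) - j + 1 := by push_cast; ring
  have hj : b + j + 1 = b + (i + j : ℕ) - i + 1 := by push_cast; ring
  have hchoose := Nat.add_choose_mul_factorial_mul_factorial j i
  rw [add_comm j i] at hchoose
  rw [besselCoeff, besselCoeff, mul_inv, mul_inv, hi, hj, inv_Gamma_sub_nat_add_one,
    inv_Gamma_sub_nat_add_one, ← hchoose]
  have hc : ((i + j).choose i : ℝ) ≠ 0 := mod_cast (Nat.choose_pos (Nat.le_add_right i j)).ne'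
  push_cast
  field_simp

theorem besselProdCoeff_le {ν : ℝ} (hν : -1 < ν) (k : ℕ) :
    besselProdCoeff (ν - 1) (ν + 2) k ≤ besselProdCoeff ν (ν + 1) k := by
  have hz : -1 < ν + k := by linarith [(Nat.cast_nonneg k : (0 : ℝ) ≤ k)]
  have hpoch : 0 ≤ (descPochhammer ℝ k).eval (ν + (ν + 1) + 2 * k) :=
    descPochhammer_nonneg (by linarith)
  rw [besselProdCoeff_eq, besselProdCoeff_eq, show ν - 1 + (ν + 2) = ν + (ν + 1) by ring,
    div_eq_mul_inv, div_eq_mul_inv, mul_inv, mul_inv, mul_inv, mul_inv, mul_assoc, mul_assoc]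
  refine mul_le_mul_of_nonneg_left (mul_le_mul_of_nonneg_left ?_ (by positivity)) hpoch
  rw [show ν - 1 + k + 1 = ν + k by ring, show ν + 2 + k + 1 = ν + k + 3 by ring,
    show ν + 1 + k + 1 = ν + k + 2 by ring]
  exact inv_Gamma_mul_inv_Gamma_add_three_le hz

theorem stmt_13 (ν : ℝ) (hν : -1 < ν) (x : ℝ) (hx : 0 < x) :
    besselI ν x * besselI (ν + 1) x - besselI (ν - 1) x * besselI (ν + 2) x ≥ 0 := by
  rw [ge_iff_le, sub_nonneg, besselI_mul_besselI _ _ hx, besselI_mul_besselI _ _ hx,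
    show ν - 1 + (ν + 2) = ν + (ν + 1) by ring]
  gcongr with k
  exacts [summable_besselProdCoeff_mul_pow _ _ _, summable_besselProdCoeff_mul_pow _ _ _,
    besselProdCoeff_le hν k]
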